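/- Let b, c ∈ ℂ with |b| ≤ 1, |c| ≤ 1, set m = |4b − 2c| and n = |2c|, and assume m ≤ 2. Let ρ₃ be the smallest root in (0,1) of the equation (1 − √2) + (2 − √2)(m+n) r + (11 − √2 + 3 m n − √2 m n) r² + 8(m+n) r³ + (11 + √2 + 3 m n + √2 m n) r⁴ + (2 + √2)(m+n) r⁵ + (1 + √2) r⁶ = 0 (such a root exists). Then for every f ∈ K²_{b,c} and every z ∈ ℂ with 0 < |z| < ρ₃, one has |(z·f'(z)/f(z))² − 1| < 1. (That is, ρ₃ is the radius of lemniscate starlikeness for the class K²_{b,c}.) -/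

import Mathlib

/-!
Write `f = z p q / (1 - z²)` with `p = f / g` and `q = g (1 - z²) / z`, two normalized functions
of positive real part with `p'(0) = 4b - 2c` and `q'(0) = 2c`, so that
`z f'/f - 1 = z p'/p + z q'/q + 2z²/(1 - z²)`.
For such a `p` the Schwarz function `w = (p - 1)/(p + 1) = z φ(z)` gives `z p'/p = 2 z w'/(1 - w²)`,
and the Schwarz–Pick lemma for `φ`, both for its value and its derivative, bounds this sharply
in terms of `|p'(0)|`. Below the smallest root `ρ` of the radius polynomial the three bounds add
up to less than `√2 - 1`, and `|X - 1| < √2 - 1` forces `|X² - 1| < 1`.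
-/

open Complex Real

open Metric Set ComplexConjugate Filter Topology

noncomputable def diskMobius (α y : ℂ) : ℂ := (y - α) / (1 - conj α * y)

lemma one_sub_conj_mul_ne_zero {α y : ℂ} (hα : ‖α‖ < 1) (hy : ‖y‖ ≤ 1) :
    1 - conj α * y ≠ 0 := by
  rw [sub_ne_zero]
  intro h
  have : ‖conj α * y‖ < 1 := by
    rw [norm_mul, norm_conj]
    nlinarith [norm_nonneg α]
  simp [← h] at this

lemma norm_one_sub_conj_mul_self {α : ℂ} (hα : ‖α‖ ≤ 1) :
    ‖1 - conj α * α‖ = 1 - ‖α‖ ^ 2 := by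
  rw [conj_mul', ← ofReal_pow, ← ofReal_one, ← ofReal_sub, norm_real, norm_of_nonneg]
  nlinarith [norm_nonneg α]

lemma normSq_one_sub_conj_mul_sub_normSq_sub (α y : ℂ) :
    normSq (1 - conj α * y) - normSq (y - α) = (1 - normSq α) * (1 - normSq y) := by
  simp only [normSq_apply, sub_re, sub_im, mul_re, mul_im, conj_re, conj_im, one_re, one_im]
  ring

lemma norm_diskMobius_lt_one {α y : ℂ} (hα : ‖α‖ < 1) (hy : ‖y‖ < 1) :
    ‖diskMobius α y‖ < 1 := by
  have hne := one_sub_conj_mul_ne_zero hα hy.le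
  rw [diskMobius, norm_div, div_lt_one (norm_pos_iff.mpr hne)]
  refine lt_of_pow_lt_pow_left₀ 2 (norm_nonneg _) ?_
  rw [Complex.sq_norm, Complex.sq_norm]
  have hα' : normSq α < 1 := by rw [← Complex.sq_norm]; nlinarith [norm_nonneg α]
  have hy' : normSq y < 1 := by rw [← Complex.sq_norm]; nlinarith [norm_nonneg y]
  nlinarith [normSq_one_sub_conj_mul_sub_normSq_sub α y]

lemma diskMobius_self (α : ℂ) : diskMobius α α = 0 := by simp [diskMobius]

lemma mapsTo_diskMobius {α : ℂ} (hα : ‖α‖ < 1) : MapsTo (diskMobius α) (ball 0 1) (ball 0 1) :=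
  fun _ hy ↦ mem_ball_zero_iff.mpr (norm_diskMobius_lt_one hα (mem_ball_zero_iff.mp hy))

lemma hasDerivAt_diskMobius {α y : ℂ} (hy : 1 - conj α * y ≠ 0) :
    HasDerivAt (diskMobius α) ((1 - conj α * α) / (1 - conj α * y) ^ 2) y := by
  have h := ((hasDerivAt_id' y).sub_const α).div
    (((hasDerivAt_id' y).const_mul (conj α)).const_sub 1) hy
  exact h.congr_deriv (by ring)

lemma differentiableOn_diskMobius {α : ℂ} (hα : ‖α‖ < 1) :
    DifferentiableOn ℂ (diskMobius α) (ball 0 1) := fun _ hy ↦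
  (hasDerivAt_diskMobius (one_sub_conj_mul_ne_zero hα
    (mem_ball_zero_iff.mp hy).le)).differentiableAt.differentiableWithinAt

lemma diskMobius_neg_zero (z : ℂ) : diskMobius (-z) 0 = z := by simp [diskMobius]

lemma norm_mul_one_add_le_of_norm_sub_le {α w : ℂ} {r : ℝ} (hα : ‖α‖ < 1) (hw : ‖w‖ < 1)
    (hr : 0 ≤ r) (hr1 : r < 1) (h : ‖w - α‖ ≤ r * ‖1 - conj α * w‖) :
    ‖w‖ * (1 + ‖α‖ * r) ≤ ‖α‖ + r := by
  set a := ‖α‖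
  set s := ‖w‖
  set x := (conj α * w).re
  have hx : x ≤ a * s := by
    calc x ≤ ‖conj α * w‖ := re_le_norm _
      _ = a * s := by rw [norm_mul, norm_conj]
  have hsq : normSq (w - α) ≤ r ^ 2 * normSq (1 - conj α * w) := by
    rw [← Complex.sq_norm, ← Complex.sq_norm, ← mul_pow]
    exact pow_le_pow_left₀ (norm_nonneg _) h 2
  have expand₁ : normSq (w - α) = s ^ 2 + a ^ 2 - 2 * x := by
    simp only [s, a, x, Complex.sq_norm, normSq_apply, sub_re, sub_im, mul_re, conj_re,
      conj_im]
    ring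
  have expand₂ : normSq (1 - conj α * w) = 1 + a ^ 2 * s ^ 2 - 2 * x := by
    simp only [s, a, x, Complex.sq_norm, normSq_apply, sub_re, sub_im, mul_re, mul_im, conj_re,
      conj_im, one_re, one_im]
    ring
  rw [expand₁, expand₂] at hsq
  have ha : 0 ≤ a := norm_nonneg _
  have hs : 0 ≤ s := norm_nonneg _
  -- the quadratic inequality in `s` factors as follows
  have hfactor : (s * (1 + a * r) - (a + r)) * (s * (1 - a * r) - (a - r)) ≤ 0 := by
    nlinarith [mul_nonneg (by nlinarith : 0 ≤ 1 - r ^ 2) (by linarith : 0 ≤ a * s - x)]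
  by_contra! hlt
  have hgap : s * (1 + a * r) - (a + r) ≤ s * (1 - a * r) - (a - r) := by
    nlinarith [mul_nonneg hr (by nlinarith : 0 ≤ 1 - a * s)]
  nlinarith

section SchwarzPick

variable {u : ℂ → ℂ} {z : ℂ}

lemma norm_mul_one_add_le_of_mapsTo_ball (hd : DifferentiableOn ℂ u (ball 0 1))
    (hu : MapsTo u (ball 0 1) (ball 0 1)) (hz : ‖z‖ < 1) :
    ‖u z‖ * (1 + ‖u 0‖ * ‖z‖) ≤ ‖u 0‖ + ‖z‖ := by
  have hα : ‖u 0‖ < 1 := mem_ball_zero_iff.mp (hu (mem_ball_self one_pos))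
  have huz : ‖u z‖ < 1 := mem_ball_zero_iff.mp (hu (mem_ball_zero_iff.mpr hz))
  have hschwarz : ‖diskMobius (u 0) (u z)‖ ≤ ‖z‖ :=
    norm_le_norm_of_mapsTo_ball ((differentiableOn_diskMobius hα).comp hd hu)
      (((mapsTo_diskMobius hα).comp hu).mono_right ball_subset_closedBall)
      (diskMobius_self _) hz
  have hne := one_sub_conj_mul_ne_zero hα huz.le
  rw [diskMobius, norm_div, div_le_iff₀ (norm_pos_iff.mpr hne)] at hschwarz
  exact norm_mul_one_add_le_of_norm_sub_le hα huz (norm_nonneg _) hz hschwarz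

lemma norm_deriv_mul_le_of_mapsTo_ball (hd : DifferentiableOn ℂ u (ball 0 1))
    (hu : MapsTo u (ball 0 1) (ball 0 1)) (hz : ‖z‖ < 1) :
    ‖deriv u z‖ * (1 - ‖z‖ ^ 2) ≤ 1 - ‖u z‖ ^ 2 := by
  have hzb : z ∈ ball (0 : ℂ) 1 := mem_ball_zero_iff.mpr hz
  set w := u z
  have hw : ‖w‖ < 1 := mem_ball_zero_iff.mp (hu hzb)
  have hz' : ‖-z‖ < 1 := by rwa [norm_neg]
  -- conjugate `u` by disc automorphisms so that `z ↦ 0` and `w ↦ 0`, then apply Schwarz at `0`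
  set G := diskMobius w ∘ u ∘ diskMobius (-z)
  have hGd : DifferentiableOn ℂ G (ball 0 1) :=
    (differentiableOn_diskMobius hw).comp (hd.comp (differentiableOn_diskMobius hz')
      (mapsTo_diskMobius hz')) (hu.comp (mapsTo_diskMobius hz'))
  have hG : MapsTo G (ball 0 1) (closedBall (G 0) 1) := by
    have h0 : G 0 = 0 := by simp [G, diskMobius_neg_zero, w, diskMobius_self]
    rw [h0]
    exact ((mapsTo_diskMobius hw).comp (hu.comp (mapsTo_diskMobius hz'))).mono_right
      ball_subset_closedBall
  have hGderiv : HasDerivAt G ((1 - conj w * w) / (1 - conj w * w) ^ 2 *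
      (deriv u z * (1 - conj z * z))) 0 := by
    have hσ := hasDerivAt_diskMobius (α := -z) (y := 0) (by simp)
    have hu' : HasDerivAt u (deriv u z) (diskMobius (-z) 0) := by
      rw [diskMobius_neg_zero]
      exact (hd.differentiableAt (isOpen_ball.mem_nhds hzb)).hasDerivAt
    have hM : HasDerivAt (diskMobius w) ((1 - conj w * w) / (1 - conj w * w) ^ 2)
        (u (diskMobius (-z) 0)) := by
      rw [diskMobius_neg_zero]
      exact hasDerivAt_diskMobius (one_sub_conj_mul_ne_zero hw hw.le)
    refine (hM.comp 0 (hu'.comp 0 hσ)).congr_deriv ?_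
    simp
  have hschwarz := norm_deriv_le_one_of_mapsTo_ball hGd hG one_pos
  have h1w : 0 < 1 - ‖w‖ ^ 2 := by nlinarith [norm_nonneg w]
  rw [hGderiv.deriv, norm_mul, norm_mul, norm_div, norm_pow, norm_one_sub_conj_mul_self hw.le,
    norm_one_sub_conj_mul_self hz.le] at hschwarz
  rw [show (1 - ‖w‖ ^ 2) / (1 - ‖w‖ ^ 2) ^ 2 = (1 - ‖w‖ ^ 2)⁻¹ by field_simp] at hschwarz
  rwa [inv_mul_le_iff₀ h1w, mul_one] at hschwarz

lemma le_of_forall_mem_Ioo_le {F G : ℝ → ℝ} (hF : Continuous F) (hG : Continuous G)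
    (h : ∀ t ∈ Ioo (0 : ℝ) 1, F t ≤ G t) : F 1 ≤ G 1 :=
  le_on_closure h hF.continuousOn hG.continuousOn (by simp [closure_Ioo zero_ne_one])

lemma mapsTo_ball_const_mul {t : ℝ} (ht : t ∈ Ioo (0 : ℝ) 1)
    (hu : MapsTo u (ball 0 1) (closedBall 0 1)) :
    MapsTo (fun y ↦ (t : ℂ) * u y) (ball 0 1) (ball 0 1) := fun y hy ↦ by
  have := mem_closedBall_zero_iff.mp (hu hy)
  rw [mem_ball_zero_iff, norm_mul, norm_real, norm_of_nonneg ht.1.le]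
  nlinarith [ht.2, mul_le_mul_of_nonneg_left this ht.1.le]

/-- **Schwarz–Pick lemma**, bound on the value. The open-disc case applies to `t * u` for
`t ∈ (0, 1)`; let `t → 1`. -/
theorem norm_mul_one_add_le_of_mapsTo_closedBall (hd : DifferentiableOn ℂ u (ball 0 1))
    (hu : MapsTo u (ball 0 1) (closedBall 0 1)) (hz : ‖z‖ < 1) :
    ‖u z‖ * (1 + ‖u 0‖ * ‖z‖) ≤ ‖u 0‖ + ‖z‖ := by
  have key : ∀ t ∈ Ioo (0 : ℝ) 1, t * ‖u z‖ * (1 + t * ‖u 0‖ * ‖z‖) ≤ t * ‖u 0‖ + ‖z‖ := by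
    intro t ht
    have := norm_mul_one_add_le_of_mapsTo_ball (hd.const_mul (t : ℂ))
      (mapsTo_ball_const_mul ht hu) hz
    simpa only [norm_mul, norm_real, norm_of_nonneg ht.1.le] using this
  simpa using le_of_forall_mem_Ioo_le (by fun_prop) (by fun_prop) key

/-- **Schwarz–Pick lemma**, bound on the derivative. -/
theorem norm_deriv_mul_le_of_mapsTo_closedBall (hd : DifferentiableOn ℂ u (ball 0 1))
    (hu : MapsTo u (ball 0 1) (closedBall 0 1)) (hz : ‖z‖ < 1) :
    ‖deriv u z‖ * (1 - ‖z‖ ^ 2) ≤ 1 - ‖u z‖ ^ 2 := by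
  have hdz := hd.differentiableAt (isOpen_ball.mem_nhds (mem_ball_zero_iff.mpr hz))
  have key : ∀ t ∈ Ioo (0 : ℝ) 1, t * ‖deriv u z‖ * (1 - ‖z‖ ^ 2) ≤ 1 - (t * ‖u z‖) ^ 2 := by
    intro t ht
    have := norm_deriv_mul_le_of_mapsTo_ball (hd.const_mul (t : ℂ))
      (mapsTo_ball_const_mul ht hu) hz
    simpa only [deriv_const_mul _ hdz, norm_mul, norm_real, norm_of_nonneg ht.1.le] using this
  simpa using le_of_forall_mem_Ioo_le (by fun_prop) (by fun_prop) key

end SchwarzPick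

noncomputable def logDerivBound (a r : ℝ) : ℝ :=
  r * (a + 4 * r + a * r ^ 2) / ((1 - r ^ 2) * (1 + a * r + r ^ 2))

lemma two_mul_div_le_logDerivBound {r t d a : ℝ} (hr0 : 0 ≤ r) (hr1 : r < 1) (ht0 : 0 ≤ t)
    (ht1 : t ≤ 1) (ha : 0 ≤ a) (hd : d * (1 - r ^ 2) ≤ 1 - t ^ 2) (ht : t * (1 + a * r) ≤ a + r) :
    2 * r * (t + r * d) / (1 - r ^ 2 * t ^ 2) ≤ logDerivBound (2 * a) r := by
  have h1 : 0 < 1 - r ^ 2 := by nlinarith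
  have h2 : 0 < 1 - r ^ 2 * t ^ 2 := by nlinarith [mul_le_mul ht1 ht1 ht0 zero_le_one]
  have k1 : (t + r * d) * (1 - r ^ 2) ≤ (t + r) * (1 - r * t) := by
    nlinarith [mul_le_mul_of_nonneg_left hd hr0]
  have k2 : (t + r) * (1 + 2 * a * r + r ^ 2) ≤ (a + 2 * r + a * r ^ 2) * (1 + r * t) := by
    nlinarith [mul_nonneg h1.le (by linarith : 0 ≤ (a + r) - t * (1 + a * r))]
  calc 2 * r * (t + r * d) / (1 - r ^ 2 * t ^ 2)
      ≤ 2 * r * (t + r) / ((1 - r ^ 2) * (1 + r * t)) := by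
        rw [div_le_div_iff₀ h2 (by positivity)]
        nlinarith [mul_le_mul_of_nonneg_left k1 (by positivity : 0 ≤ 2 * r * (1 + r * t))]
    _ ≤ logDerivBound (2 * a) r := by
        rw [logDerivBound, div_le_div_iff₀ (by positivity) (by positivity)]
        nlinarith [mul_le_mul_of_nonneg_left k2 (by positivity : 0 ≤ 2 * r * (1 - r ^ 2))]

lemma norm_two_mul_deriv_div_le_logDerivBound {w : ℂ → ℂ} {z : ℂ}
    (hd : DifferentiableOn ℂ w (ball 0 1)) (hw : MapsTo w (ball 0 1) (ball 0 1)) (hw0 : w 0 = 0)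
    (hz : ‖z‖ < 1) :
    ‖2 * z * deriv w z / (1 - w z ^ 2)‖ ≤ logDerivBound (2 * ‖deriv w 0‖) ‖z‖ := by
  set φ := dslope w 0
  have hφd : DifferentiableOn ℂ φ (ball 0 1) :=
    (differentiableOn_dslope (ball_mem_nhds 0 one_pos)).mpr hd
  have hφ : MapsTo φ (ball 0 1) (closedBall 0 1) := fun y hy ↦ by
    have := norm_dslope_le_div_of_mapsTo_ball hd
      (by rw [hw0]; exact hw.mono_right ball_subset_closedBall) hy
    rwa [div_one, ← mem_closedBall_zero_iff] at this
  have hφ0 : φ 0 = deriv w 0 := dslope_same w 0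
  have hwφ : w = fun y ↦ y * φ y := funext fun y ↦ by
    simpa [hw0] using (sub_smul_dslope w 0 y).symm
  have hzb := mem_ball_zero_iff.mpr hz
  have hderiv : deriv w z = φ z + z * deriv φ z := by
    rw [hwφ]
    exact ((hasDerivAt_id' z).mul
      (hφd.differentiableAt (isOpen_ball.mem_nhds hzb)).hasDerivAt).deriv.trans (by ring)
  set r := ‖z‖
  set t := ‖φ z‖
  have ht : t ≤ 1 := mem_closedBall_zero_iff.mp (hφ hzb)
  have hnum : ‖2 * z * deriv w z‖ ≤ 2 * r * (t + r * ‖deriv φ z‖) := by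
    rw [hderiv, norm_mul, norm_mul, Complex.norm_two]
    gcongr
    exact (norm_add_le _ _).trans_eq (by rw [norm_mul])
  have hden : 1 - r ^ 2 * t ^ 2 ≤ ‖1 - w z ^ 2‖ :=
    calc 1 - r ^ 2 * t ^ 2 = ‖(1 : ℂ)‖ - ‖w z ^ 2‖ := by simp [hwφ, r, t, mul_pow]
      _ ≤ ‖1 - w z ^ 2‖ := norm_sub_norm_le _ _
  have hrt : r * t < 1 := mul_lt_one_of_nonneg_of_lt_one_left (norm_nonneg _) hz ht
  have hden_pos : 0 < 1 - r ^ 2 * t ^ 2 := by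
    rw [← mul_pow]
    exact sub_pos.mpr (pow_lt_one₀ (by positivity) hrt two_ne_zero)
  rw [norm_div]
  refine (div_le_div₀ (by positivity) hnum hden_pos hden).trans ?_
  refine two_mul_div_le_logDerivBound (norm_nonneg _) hz (norm_nonneg _) ht (norm_nonneg _)
    (norm_deriv_mul_le_of_mapsTo_closedBall hφd hφ hz) ?_
  rw [← hφ0]
  exact norm_mul_one_add_le_of_mapsTo_closedBall hφd hφ hz

lemma add_one_ne_zero_of_re_pos {x : ℂ} (hx : 0 < x.re) : x + 1 ≠ 0 := fun h ↦ by
  have := congrArg re h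
  simp only [add_re, one_re, zero_re] at this
  linarith

lemma norm_sub_one_div_add_one_lt_one {x : ℂ} (hx : 0 < x.re) : ‖(x - 1) / (x + 1)‖ < 1 := by
  have hne := add_one_ne_zero_of_re_pos hx
  rw [norm_div, div_lt_one (norm_pos_iff.mpr hne)]
  refine lt_of_pow_lt_pow_left₀ 2 (norm_nonneg _) ?_
  rw [Complex.sq_norm, Complex.sq_norm, normSq_apply, normSq_apply]
  simp only [sub_re, sub_im, add_re, add_im, one_re, one_im]
  nlinarith

theorem norm_mul_logDeriv_le_logDerivBound {p : ℂ → ℂ} {z : ℂ}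
    (hd : DifferentiableOn ℂ p (ball 0 1)) (hre : ∀ y ∈ ball (0 : ℂ) 1, 0 < (p y).re)
    (hp0 : p 0 = 1) (hz : ‖z‖ < 1) :
    ‖z * logDeriv p z‖ ≤ logDerivBound ‖deriv p 0‖ ‖z‖ := by
  have hne : ∀ y ∈ ball (0 : ℂ) 1, p y + 1 ≠ 0 := fun y hy ↦ add_one_ne_zero_of_re_pos (hre y hy)
  set w := fun y ↦ (p y - 1) / (p y + 1)
  have hwd : DifferentiableOn ℂ w (ball 0 1) := (hd.sub_const 1).div (hd.add_const 1) hne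
  have hderiv : ∀ y ∈ ball (0 : ℂ) 1, deriv w y = 2 * deriv p y / (p y + 1) ^ 2 := fun y hy ↦ by
    have hp := (hd.differentiableAt (isOpen_ball.mem_nhds hy)).hasDerivAt
    exact ((hp.sub_const 1).div (hp.add_const 1) (hne y hy)).deriv.trans (by ring)
  have hzb := mem_ball_zero_iff.mpr hz
  have key := norm_two_mul_deriv_div_le_logDerivBound hwd
    (fun y hy ↦ mem_ball_zero_iff.mpr (norm_sub_one_div_add_one_lt_one (hre y hy)))
    (by simp [w, hp0]) hz
  have hpz : p z ≠ 0 := fun h ↦ by simpa [h] using hre z hzb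
  have hpz1 := hne z hzb
  calc ‖z * logDeriv p z‖ = ‖2 * z * deriv w z / (1 - w z ^ 2)‖ := by
        have h1w : 1 - w z ^ 2 = 4 * p z / (p z + 1) ^ 2 := by
          simp only [w]
          field_simp
          ring
        rw [logDeriv_apply, hderiv z hzb, h1w]
        congr 1
        field_simp
        ring
    _ ≤ logDerivBound (2 * ‖deriv w 0‖) ‖z‖ := key
    _ = logDerivBound ‖deriv p 0‖ ‖z‖ := by
        rw [hderiv 0 (mem_ball_self one_pos), hp0]
        norm_num
        congr 1
        ring

lemma deriv_dslope_self {𝕜 : Type*} [NontriviallyNormedField 𝕜] [CompleteSpace 𝕜] [CharZero 𝕜]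
    {f : 𝕜 → 𝕜} {x : 𝕜} (hf : AnalyticAt 𝕜 f x) :
    deriv (dslope f x) x = iteratedDeriv 2 f x / 2 := by
  rw [show deriv (dslope f x) x = _ from
    hf.hasFPowerSeriesAt.has_fpower_series_dslope_fslope.deriv]
  change FormalMultilinearSeries.coeff _ 1 = _
  rw [FormalMultilinearSeries.coeff_fslope, FormalMultilinearSeries.coeff_ofScalars]
  norm_num [Nat.factorial]

lemma dslope_zero_of_ne {f : ℂ → ℂ} (hf0 : f 0 = 0) {y : ℂ} (hy : y ≠ 0) :
    dslope f 0 y = f y / y := by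
  rw [dslope_of_ne f hy, slope_def_field, hf0, sub_zero, sub_zero]

lemma mul_deriv_div_sub_one_eq {f p q : ℂ → ℂ} {z : ℂ}
    (hf : f =ᶠ[𝓝 z] fun y ↦ y * (p y * q y) / (1 - y ^ 2)) (hz : z ≠ 0) (hz2 : 1 - z ^ 2 ≠ 0)
    (hp : DifferentiableAt ℂ p z) (hq : DifferentiableAt ℂ q z) (hpz : p z ≠ 0) (hqz : q z ≠ 0) :
    z * deriv f z / f z - 1 = z * logDeriv p z + z * logDeriv q z + 2 * z ^ 2 / (1 - z ^ 2) := by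
  have hd := ((hasDerivAt_id' z).fun_mul (hp.hasDerivAt.fun_mul hq.hasDerivAt)).fun_div
    ((hasDerivAt_pow 2 z).const_sub 1) hz2
  rw [hf.deriv_eq, hd.deriv, hf.eq_of_nhds, logDeriv_apply, logDeriv_apply]
  field_simp
  ring

lemma one_sub_norm_sq_le_norm_one_sub_sq (z : ℂ) : 1 - ‖z‖ ^ 2 ≤ ‖1 - z ^ 2‖ := by
  have := norm_sub_norm_le (1 : ℂ) (z ^ 2)
  rwa [norm_one, norm_pow] at this

lemma one_sub_sq_ne_zero {z : ℂ} (hz : ‖z‖ < 1) : 1 - z ^ 2 ≠ 0 := fun h ↦ by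
  have := one_sub_norm_sq_le_norm_one_sub_sq z
  rw [h, norm_zero] at this
  nlinarith [norm_nonneg z]

lemma norm_two_mul_sq_div_one_sub_sq_le {z : ℂ} (hz : ‖z‖ < 1) :
    ‖2 * z ^ 2 / (1 - z ^ 2)‖ ≤ 2 * ‖z‖ ^ 2 / (1 - ‖z‖ ^ 2) := by
  rw [norm_div, norm_mul, norm_pow, Complex.norm_two]
  exact div_le_div_of_nonneg_left (by positivity) (by nlinarith [norm_nonneg z])
    (one_sub_norm_sq_le_norm_one_sub_sq z)

lemma deriv_div_zero_of_eq_one {𝕜 : Type*} [NontriviallyNormedField 𝕜] {F G : 𝕜 → 𝕜}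
    (hF : DifferentiableAt 𝕜 F 0) (hG : DifferentiableAt 𝕜 G 0) (hF0 : F 0 = 1) (hG0 : G 0 = 1) :
    deriv (fun y ↦ F y / G y) 0 = deriv F 0 - deriv G 0 := by
  rw [(hF.hasDerivAt.fun_div hG.hasDerivAt (by rw [hG0]; exact one_ne_zero)).deriv, hF0, hG0]
  ring

lemma deriv_mul_one_sub_sq_zero {𝕜 : Type*} [NontriviallyNormedField 𝕜] {G : 𝕜 → 𝕜}
    (hG : DifferentiableAt 𝕜 G 0) : deriv (fun y ↦ G y * (1 - y ^ 2)) 0 = deriv G 0 := by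
  rw [(hG.hasDerivAt.fun_mul ((hasDerivAt_pow 2 (0 : 𝕜)).const_sub 1)).deriv]
  simp

section ClassK

variable {f g : ℂ → ℂ}

lemma re_dslope_div_dslope_pos (hf0 : f 0 = 0) (hg0 : g 0 = 0) (hf1 : deriv f 0 = 1)
    (hg1 : deriv g 0 = 1) (hpos : ∀ z ∈ ball (0 : ℂ) 1, z ≠ 0 → 0 < (f z / g z).re) :
    ∀ y ∈ ball (0 : ℂ) 1, 0 < (dslope f 0 y / dslope g 0 y).re := by
  intro y hy
  rcases eq_or_ne y 0 with rfl | hy0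
  · simp [dslope_same, hf1, hg1]
  · rw [dslope_zero_of_ne hf0 hy0, dslope_zero_of_ne hg0 hy0, div_div_div_cancel_right₀ hy0]
    exact hpos y hy hy0

lemma re_dslope_mul_one_sub_sq_pos (hg0 : g 0 = 0) (hg1 : deriv g 0 = 1)
    (hpos : ∀ z ∈ ball (0 : ℂ) 1, z ≠ 0 → 0 < (g z * (1 - z ^ 2) / z).re) :
    ∀ y ∈ ball (0 : ℂ) 1, 0 < (dslope g 0 y * (1 - y ^ 2)).re := by
  intro y hy
  rcases eq_or_ne y 0 with rfl | hy0
  · simp [dslope_same, hg1]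
  · rw [dslope_zero_of_ne hg0 hy0, div_mul_eq_mul_div]
    exact hpos y hy hy0

theorem norm_mul_deriv_div_sub_one_le (hf : DifferentiableOn ℂ f (ball 0 1))
    (hg : DifferentiableOn ℂ g (ball 0 1)) (hf0 : f 0 = 0) (hg0 : g 0 = 0) (hf1 : deriv f 0 = 1)
    (hg1 : deriv g 0 = 1) (hpos : ∀ z ∈ ball (0 : ℂ) 1, z ≠ 0 →
      0 < (f z / g z).re ∧ 0 < (g z * (1 - z ^ 2) / z).re)
    {z : ℂ} (hz : z ∈ ball (0 : ℂ) 1) (hz0 : z ≠ 0) :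
    ‖z * deriv f z / f z - 1‖ ≤
      logDerivBound ‖deriv (dslope f 0) 0 - deriv (dslope g 0) 0‖ ‖z‖ +
      logDerivBound ‖deriv (dslope g 0) 0‖ ‖z‖ + 2 * ‖z‖ ^ 2 / (1 - ‖z‖ ^ 2) := by
  have hB := ball_mem_nhds (0 : ℂ) one_pos
  set F := dslope f 0
  set G := dslope g 0
  have hF : DifferentiableOn ℂ F (ball 0 1) := (differentiableOn_dslope hB).mpr hf
  have hG : DifferentiableOn ℂ G (ball 0 1) := (differentiableOn_dslope hB).mpr hg
  have hF0 : F 0 = 1 := (dslope_same f 0).trans hf1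
  have hG0 : G 0 = 1 := (dslope_same g 0).trans hg1
  set p := fun y ↦ F y / G y
  set q := fun y ↦ G y * (1 - y ^ 2)
  have hp_re : ∀ y ∈ ball (0 : ℂ) 1, 0 < (p y).re :=
    re_dslope_div_dslope_pos hf0 hg0 hf1 hg1 fun y hy hy0 ↦ (hpos y hy hy0).1
  have hq_re : ∀ y ∈ ball (0 : ℂ) 1, 0 < (q y).re :=
    re_dslope_mul_one_sub_sq_pos hg0 hg1 fun y hy hy0 ↦ (hpos y hy hy0).2
  have hGne : ∀ y ∈ ball (0 : ℂ) 1, G y ≠ 0 := fun y hy h ↦ by simpa [q, h] using hq_re y hy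
  have hp : DifferentiableOn ℂ p (ball 0 1) := hF.div hG hGne
  have hq : DifferentiableOn ℂ q (ball 0 1) := hG.mul (by fun_prop)
  have hp'0 : deriv p 0 = deriv F 0 - deriv G 0 :=
    deriv_div_zero_of_eq_one (hF.differentiableAt hB) (hG.differentiableAt hB) hF0 hG0
  have hq'0 : deriv q 0 = deriv G 0 := deriv_mul_one_sub_sq_zero (hG.differentiableAt hB)
  have hz1 : ‖z‖ < 1 := mem_ball_zero_iff.mp hz
  have hfac : f =ᶠ[𝓝 z] fun y ↦ y * (p y * q y) / (1 - y ^ 2) := by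
    filter_upwards [isOpen_ball.mem_nhds hz] with y hy
    have := sub_smul_dslope f 0 y
    rw [sub_zero, hf0, sub_zero, smul_eq_mul] at this
    rw [← this, eq_div_iff (one_sub_sq_ne_zero (mem_ball_zero_iff.mp hy))]
    simp only [p, q, F]
    field_simp [hGne y hy]
  have hnear := isOpen_ball.mem_nhds hz
  rw [mul_deriv_div_sub_one_eq hfac hz0 (one_sub_sq_ne_zero hz1) (hp.differentiableAt hnear)
    (hq.differentiableAt hnear) (fun h ↦ by simpa [h] using hp_re z hz)
    (fun h ↦ by simpa [h] using hq_re z hz)]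
  calc _ ≤ ‖z * logDeriv p z‖ + ‖z * logDeriv q z‖ + ‖2 * z ^ 2 / (1 - z ^ 2)‖ :=
        (norm_add_le _ _).trans (add_le_add_left (norm_add_le _ _) _)
    _ ≤ _ := by
      gcongr
      · exact hp'0 ▸ norm_mul_logDeriv_le_logDerivBound hp hp_re (by simp [p, hF0, hG0]) hz1
      · exact hq'0 ▸ norm_mul_logDeriv_le_logDerivBound hq hq_re (by simp [q, hG0]) hz1
      · exact norm_two_mul_sq_div_one_sub_sq_le hz1

end ClassK

noncomputable def radiusPoly (m n r : ℝ) : ℝ :=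
  (1 - √2) + (2 - √2) * (m + n) * r + (11 - √2 + 3 * m * n - √2 * m * n) * r ^ 2
    + 8 * (m + n) * r ^ 3 + (11 + √2 + 3 * m * n + √2 * m * n) * r ^ 4
    + (2 + √2) * (m + n) * r ^ 5 + (1 + √2) * r ^ 6

lemma continuous_radiusPoly (m n : ℝ) : Continuous (radiusPoly m n) := by
  unfold radiusPoly
  fun_prop

lemma radiusPoly_zero_neg (m n : ℝ) : radiusPoly m n 0 < 0 := by
  simp [radiusPoly, one_lt_sqrt_two]

lemma neg_of_lt_of_forall_root_ge {P : ℝ → ℝ} {ρ r : ℝ} (hP : Continuous P) (h0 : P 0 < 0)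
    (hρ : ρ ≤ 1) (hroot : ∀ x ∈ Ioo (0 : ℝ) 1, P x = 0 → ρ ≤ x) (hr0 : 0 ≤ r) (hr : r < ρ) :
    P r < 0 := by
  by_contra! h
  obtain ⟨x, hx, hPx⟩ := intermediate_value_Icc hr0 hP.continuousOn ⟨h0.le, h⟩
  have hx0 : 0 < x := hx.1.lt_of_ne (by rintro rfl; exact h0.ne hPx)
  linarith [hroot x ⟨hx0, by linarith [hx.2]⟩ hPx, hx.2]

/-- The radius polynomial clears the denominators of the sum of the three distortion bounds. -/
lemma sqrt_two_sub_one_sub_bounds_eq {m n r : ℝ} (hm : 0 ≤ m) (hn : 0 ≤ n) (hr0 : 0 ≤ r)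
    (hr1 : r < 1) :
    (√2 - 1) - (logDerivBound m r + logDerivBound n r + 2 * r ^ 2 / (1 - r ^ 2)) =
      -radiusPoly m n r / ((1 - r ^ 2) * (1 + m * r + r ^ 2) * (1 + n * r + r ^ 2)) := by
  have h1 : 1 - r ^ 2 ≠ 0 := by nlinarith
  have h2 : 1 + m * r + r ^ 2 ≠ 0 := by positivity
  have h3 : 1 + n * r + r ^ 2 ≠ 0 := by positivity
  unfold logDerivBound radiusPoly
  field_simp
  ring

lemma bounds_lt_sqrt_two_sub_one {m n r : ℝ} (hm : 0 ≤ m) (hn : 0 ≤ n) (hr0 : 0 ≤ r)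
    (hr1 : r < 1) (hP : radiusPoly m n r < 0) :
    logDerivBound m r + logDerivBound n r + 2 * r ^ 2 / (1 - r ^ 2) < √2 - 1 := by
  have h1 : 0 < 1 - r ^ 2 := by nlinarith
  have hpos : 0 < -radiusPoly m n r / ((1 - r ^ 2) * (1 + m * r + r ^ 2) * (1 + n * r + r ^ 2)) :=
    div_pos (neg_pos.mpr hP) (by positivity)
  linarith [sqrt_two_sub_one_sub_bounds_eq hm hn hr0 hr1]

lemma norm_sq_sub_one_lt_one {X : ℂ} (h : ‖X - 1‖ < √2 - 1) : ‖X ^ 2 - 1‖ < 1 := by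
  have hX : ‖X + 1‖ ≤ ‖X - 1‖ + 2 := by
    have := norm_add_le (X - 1) 2
    rwa [Complex.norm_two, show X - 1 + 2 = X + 1 by ring] at this
  have hs : √2 ^ 2 = 2 := sq_sqrt zero_le_two
  rw [show X ^ 2 - 1 = (X - 1) * (X + 1) by ring, norm_mul]
  calc ‖X - 1‖ * ‖X + 1‖ ≤ ‖X - 1‖ * (‖X - 1‖ + 2) := by gcongr
    _ < (√2 - 1) * (√2 - 1 + 2) := by gcongr
    _ = 1 := by nlinarith

theorem stmt_9_general (b c : ℂ)
    (m : ℝ) (hm : m = ‖4 * b - 2 * c‖)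
    (n : ℝ) (hn : n = ‖2 * c‖)
    (f : ℂ → ℂ) (hf : AnalyticOnNhd ℂ f (Metric.ball (0:ℂ) 1))
    (hf0 : f 0 = 0) (hf1 : deriv f 0 = 1)
    (hf2 : iteratedDeriv 2 f 0 / 2 = 4 * b)
    (hg : ∃ g : ℂ → ℂ, AnalyticOnNhd ℂ g (Metric.ball (0:ℂ) 1) ∧
      g 0 = 0 ∧ deriv g 0 = 1 ∧ iteratedDeriv 2 g 0 / 2 = 2 * c ∧
      ∀ z ∈ Metric.ball (0:ℂ) 1, z ≠ 0 →
        0 < (f z / g z).re ∧ 0 < (g z * (1 - z ^ 2) / z).re)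
    (ρ : ℝ) (hρ : ρ ∈ Set.Ioo (0:ℝ) 1)
    (hsmall : ∀ r ∈ Set.Ioo (0:ℝ) 1, (1 - (Real.sqrt 2)) + (2 - (Real.sqrt 2))*(m + n)*r + (11 - (Real.sqrt 2) + 3*m*n - (Real.sqrt 2)*m*n)*r^2 + 8*(m + n)*r^3 + (11 + (Real.sqrt 2) + 3*m*n + (Real.sqrt 2)*m*n)*r^4 + (2 + (Real.sqrt 2))*(m + n)*r^5 + (1 + (Real.sqrt 2))*r^6 = 0 → ρ ≤ r) :
    ∀ z : ℂ, 0 < ‖z‖ → ‖z‖ < ρ →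
      ‖(z * deriv f z / f z) ^ 2 - 1‖ < 1 := by
  obtain ⟨g, hg, hg0, hg1, hg2, hpos⟩ := hg
  intro z hz0 hzρ
  have hz1 : ‖z‖ < 1 := hzρ.trans hρ.2
  have h0 := mem_ball_self (x := (0 : ℂ)) one_pos
  have hdist := norm_mul_deriv_div_sub_one_le hf.differentiableOn hg.differentiableOn hf0 hg0
    hf1 hg1 hpos (mem_ball_zero_iff.mpr hz1) (norm_pos_iff.mp hz0)
  rw [deriv_dslope_self (hf 0 h0), deriv_dslope_self (hg 0 h0), hf2, hg2, ← hm, ← hn] at hdist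
  have hP : radiusPoly m n ‖z‖ < 0 := neg_of_lt_of_forall_root_ge (continuous_radiusPoly m n)
    (radiusPoly_zero_neg m n) hρ.2.le hsmall (norm_nonneg z) hzρ
  exact norm_sq_sub_one_lt_one (hdist.trans_lt (bounds_lt_sqrt_two_sub_one
    (hm ▸ norm_nonneg _) (hn ▸ norm_nonneg _) (norm_nonneg z) hz1 hP))

theorem stmt_9 (b c : ℂ) (hb : ‖b‖ ≤ 1) (hc : ‖c‖ ≤ 1)
    (m : ℝ) (hm : m = ‖4 * b - 2 * c‖)
    (n : ℝ) (hn : n = ‖2 * c‖)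
    (hm2 : m ≤ 2)
    (f : ℂ → ℂ) (hf : AnalyticOnNhd ℂ f (Metric.ball (0:ℂ) 1))
    (hf0 : f 0 = 0) (hf1 : deriv f 0 = 1)
    (hf2 : iteratedDeriv 2 f 0 / 2 = 4 * b)
    (hg : ∃ g : ℂ → ℂ, AnalyticOnNhd ℂ g (Metric.ball (0:ℂ) 1) ∧
      g 0 = 0 ∧ deriv g 0 = 1 ∧ iteratedDeriv 2 g 0 / 2 = 2 * c ∧
      ∀ z ∈ Metric.ball (0:ℂ) 1, z ≠ 0 →
        0 < (f z / g z).re ∧ 0 < (g z * (1 - z ^ 2) / z).re)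
    (ρ : ℝ) (hρ : ρ ∈ Set.Ioo (0:ℝ) 1)
    (hroot : (1 - (Real.sqrt 2)) + (2 - (Real.sqrt 2))*(m + n)*ρ + (11 - (Real.sqrt 2) + 3*m*n - (Real.sqrt 2)*m*n)*ρ^2 + 8*(m + n)*ρ^3 + (11 + (Real.sqrt 2) + 3*m*n + (Real.sqrt 2)*m*n)*ρ^4 + (2 + (Real.sqrt 2))*(m + n)*ρ^5 + (1 + (Real.sqrt 2))*ρ^6 = 0)
    (hsmall : ∀ r ∈ Set.Ioo (0:ℝ) 1, (1 - (Real.sqrt 2)) + (2 - (Real.sqrt 2))*(m + n)*r + (11 - (Real.sqrt 2) + 3*m*n - (Real.sqrt 2)*m*n)*r^2 + 8*(m + n)*r^3 + (11 + (Real.sqrt 2) + 3*m*n + (Real.sqrt 2)*m*n)*r^4 + (2 + (Real.sqrt 2))*(m + n)*r^5 + (1 + (Real.sqrt 2))*r^6 = 0 → ρ ≤ r) :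
    ∀ z : ℂ, 0 < ‖z‖ → ‖z‖ < ρ →
      ‖(z * deriv f z / f z) ^ 2 - 1‖ < 1 :=
  stmt_9_general b c m hm n hn f hf hf0 hf1 hf2 hg ρ hρ hsmall
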